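/- arXiv:1912.02247 — 2 statements merged into one kernel-verified Lean document; each statement's English description precedes it below -/
import Mathlib

section
/- Let V ⊂ ∂Ω \ {∞} be relatively open with C_p(V) = 0, where X is a complete metric measure space with doubling measure supporting a p-Poincaré inequality (so X is quasiconvex, hence locally connected, and sets of capacity zero cannot separate the space). Then Ω ∪ V is open in X. -/
open Filter Topology Set Metric
open scoped ENNReal

/-- Let `V ⊆ ∂Ω \ {∞}` be relatively open in `∂Ω` with `C_p(V) = 0`,
where `X` is (as in the standing assumptions) quasiconvex, hence locally connected, and
sets of capacity zero cannot separate the space (for every connected open `G` and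
`E ⊆ G` with `C_p(E) = 0`, the set `G \ E` is connected). Then `Ω ∪ V` is open in `X`. -/
theorem union_of_capacity_null_bdry_open {X : Type*} [MetricSpace X]
    [LocallyConnectedSpace X]
    (Cp : Set X → ℝ≥0∞)
    (hmono : ∀ A B : Set X, A ⊆ B → Cp A ≤ Cp B)
    (hsep : ∀ G : Set X, IsOpen G → IsConnected G →
      ∀ E ⊆ G, Cp E = 0 → IsConnected (G \ E))
    (Ω : Set X) (hΩ : IsOpen Ω)
    (V : Set X) (hVsub : V ⊆ frontier Ω)
    (hVrel : ∃ U : Set X, IsOpen U ∧ V = U ∩ frontier Ω)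
    (hCpV : Cp V = 0) :
    IsOpen (Ω ∪ V) := by
  obtain ⟨U, hU, hVU⟩ := hVrel
  rw [isOpen_iff_mem_nhds]
  rintro x (hx | hx)
  · exact Filter.mem_of_superset (hΩ.mem_nhds hx) subset_union_left
  · -- x ∈ V, so x ∈ U
    have hxU : x ∈ U := by rw [hVU] at hx; exact hx.1
    obtain ⟨G, ⟨hGopen, hxG, hGconn⟩, hGU⟩ :=
      (LocallyConnectedSpace.open_connected_basis x).mem_iff.mp (hU.mem_nhds hxU)
    refine Filter.mem_of_superset (hGopen.mem_nhds hxG) ?_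
    -- E := G ∩ frontier Ω ⊆ V
    set E : Set X := G ∩ frontier Ω with hE
    have hEV : E ⊆ V := by
      rw [hVU]; exact fun y hy => ⟨hGU hy.1, hy.2⟩
    have hCpE : Cp E = 0 := le_antisymm (hCpV ▸ hmono _ _ hEV) zero_le
    have hconn : IsConnected (G \ E) := hsep G hGopen hGconn E inter_subset_left hCpE
    have hGE : G \ E = G \ frontier Ω := by
      ext y; simp [hE, and_comm]
    rw [hGE] at hconn
    -- G ⊆ closure Ω
    have hGcl : G ⊆ closure Ω := by
      by_contra h
      obtain ⟨z, hzG, hzcl⟩ := not_subset.mp h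
      have hA : (G ∩ Ω).Nonempty := by
        have hxcl : x ∈ closure Ω := (hVsub hx).1
        exact mem_closure_iff.mp hxcl G hGopen hxG
      have hB : (G ∩ (closure Ω)ᶜ).Nonempty := ⟨z, hzG, hzcl⟩
      have hcover : G \ frontier Ω ⊆ Ω ∪ (closure Ω)ᶜ := by
        intro y hy
        rcases em (y ∈ closure Ω) with hc | hc
        · left
          rcases em (y ∈ Ω) with h' | h'
          · exact h'
          · exact absurd ⟨hc, by rwa [hΩ.interior_eq]⟩ hy.2
        · exact Or.inr hc
      obtain ⟨a, haG, haΩ⟩ := hA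
      obtain ⟨b, hbG, hbcl⟩ := hB
      obtain ⟨w, hw1, hw2, hw3⟩ := hconn.isPreconnected Ω (closure Ω)ᶜ hΩ
        (isClosed_closure.isOpen_compl) hcover
        ⟨a, ⟨haG, fun hf => hf.2 (by rwa [hΩ.interior_eq])⟩, haΩ⟩
        ⟨b, ⟨hbG, fun hf => hbcl hf.1⟩, hbcl⟩
      exact hw3 (subset_closure hw2)
    -- conclude G ⊆ Ω ∪ V
    intro y hyG
    rcases em (y ∈ Ω) with h | h
    · exact Or.inl h
    · right
      rw [hVU]
      refine ⟨hGU hyG, hGcl hyG, ?_⟩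
      rwa [hΩ.interior_eq]
end

section
/- Under the standing assumptions, if there is a neighbourhood V of x₀ ∈ ∂Ω \ {∞} with C_p(V ∩ ∂Ω) = 0, then there is a neighbourhood U of x₀ with C_p(U \ Ω) = 0; conversely, if C_p(V \ Ω) = 0 for some neighbourhood V of x₀, then C_p(V ∩ ∂Ω) = 0. -/
open Filter Topology Set Metric
open scoped ENNReal

/-- (Standing assumptions; `X` is locally connected and sets of
`C_p`-capacity zero cannot separate the space, and `C_p` is monotone.) If there is a
neighbourhood `V` of `x₀ ∈ ∂Ω \ {∞}` with `C_p(V ∩ ∂Ω) = 0`, then there is a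
neighbourhood `U` of `x₀` with `C_p(U \ Ω) = 0`; conversely, if `C_p(V \ Ω) = 0` for
some neighbourhood `V` of `x₀`, then `C_p(V ∩ ∂Ω) = 0`. -/
theorem nbhd_capacity_bdry_iff {X : Type*} [MetricSpace X] [LocallyConnectedSpace X]
    (Cp : Set X → ℝ≥0∞)
    (hmono : ∀ A B : Set X, A ⊆ B → Cp A ≤ Cp B)
    (hsep : ∀ G : Set X, IsOpen G → IsConnected G →
      ∀ E ⊆ G, Cp E = 0 → IsConnected (G \ E))
    (Ω : Set X) (hΩ : IsOpen Ω)
    (x₀ : X) (hx₀ : x₀ ∈ frontier Ω) :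
    (∀ V ∈ 𝓝 x₀, Cp (V ∩ frontier Ω) = 0 → ∃ U ∈ 𝓝 x₀, Cp (U \ Ω) = 0) ∧
      (∀ V ∈ 𝓝 x₀, Cp (V \ Ω) = 0 → Cp (V ∩ frontier Ω) = 0) := by
  constructor
  · intro V hV hcap
    -- choose a connected open neighbourhood G ⊆ V of x₀
    obtain ⟨G, hGV, hGopen, hxG, hGconn⟩ :=
      (locallyConnectedSpace_iff_subsets_isOpen_isConnected.mp ‹_›) x₀ V hV
    set E : Set X := G ∩ frontier Ω with hE
    have hEcap : Cp E = 0 :=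
      le_antisymm (hcap ▸ hmono E (V ∩ frontier Ω)
        (inter_subset_inter_left _ hGV)) (zero_le)
    have hconn : IsConnected (G \ E) :=
      hsep G hGopen hGconn E inter_subset_left hEcap
    have hdiff : G \ E = G \ frontier Ω := by
      ext y
      constructor
      · rintro ⟨hyG, hyE⟩; exact ⟨hyG, fun h => hyE ⟨hyG, h⟩⟩
      · rintro ⟨hyG, hyf⟩; exact ⟨hyG, fun h => hyf h.2⟩
    -- the connected set G \ ∂Ω is covered by Ω and (closure Ω)ᶜ
    have hcover : G \ E ⊆ Ω ∪ (closure Ω)ᶜ := by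
      rw [hdiff]
      intro y hy
      by_cases hyc : y ∈ closure Ω
      · left
        rcases (em (y ∈ Ω)) with h | h
        · exact h
        · exact absurd ⟨hyc, by simpa [hΩ.interior_eq] using h⟩ (fun h' => hy.2 h')
      · exact Or.inr hyc
    have hdisj : Disjoint Ω (closure Ω)ᶜ :=
      disjoint_compl_right.mono_left subset_closure
    -- G ∩ Ω is nonempty since x₀ ∈ closure Ω
    have hnonempty : ((G \ E) ∩ Ω).Nonempty := by
      have : (G ∩ Ω).Nonempty := by
        have hx₀cl : x₀ ∈ closure Ω := hx₀.1
        rcases mem_closure_iff.mp hx₀cl G hGopen hxG with ⟨y, hyG, hyΩ⟩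
        exact ⟨y, hyG, hyΩ⟩
      obtain ⟨y, hyG, hyΩ⟩ := this
      refine ⟨y, ⟨hyG, ?_⟩, hyΩ⟩
      intro hyE
      exact hyE.2.2 (by rwa [hΩ.interior_eq])
    have hsub : G \ E ⊆ Ω :=
      hconn.isPreconnected.subset_left_of_subset_union hΩ
        isClosed_closure.isOpen_compl hdisj hcover hnonempty
    refine ⟨G, hGopen.mem_nhds hxG, ?_⟩
    have : G \ Ω ⊆ V ∩ frontier Ω := by
      intro y hy
      rcases em (y ∈ frontier Ω) with h | h
      · exact ⟨hGV hy.1, h⟩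
      · exact absurd (hsub ⟨hy.1, fun hE' => h hE'.2⟩) hy.2
    exact le_antisymm (hcap ▸ hmono _ _ this) (zero_le)
  · intro V hV hcap
    have hsub : V ∩ frontier Ω ⊆ V \ Ω := by
      intro y hy
      exact ⟨hy.1, fun hyΩ => hy.2.2 (by rwa [hΩ.interior_eq])⟩
    exact le_antisymm (hcap ▸ hmono _ _ hsub) (zero_le)
end
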